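/- arXiv:1206.1381 — 6 statements merged into one kernel-verified Lean document; each statement's English description precedes it below -/
import Mathlib

section
/- For every integer m ≥ 2 one has q_m(0) > 0, q_m(5) > 0 and q_m(6) < 0. Moreover q_{m+1}(0) > 20·q_m(0) for every m ≥ 2, and q_m(6) ≤ q_{m−1}(6) for every m ≥ 3. -/
open Function

noncomputable section

/-- The polynomial map `f(x) = x(5-x)`. -/
def f (x : ℝ) : ℝ := x * (5 - x)

/-- `l(x) = x - 6`. -/
def lf (x : ℝ) : ℝ := x - 6

/-- `s(x) = (2-x)(4-x)(5-x) - (14-3x)`. -/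
def sf (x : ℝ) : ℝ := (2 - x) * (4 - x) * (5 - x) - (14 - 3 * x)

/-- `r(x) = -2(2-x)(5-x)`. -/
def rf (x : ℝ) : ℝ := -2 * (2 - x) * (5 - x)

/-- The decreasing inverse branch of `f`. -/
def phim (x : ℝ) : ℝ := (5 - Real.sqrt (25 - 4 * x)) / 2

/-- The increasing inverse branch of `f`. -/
def phip (x : ℝ) : ℝ := (5 + Real.sqrt (25 - 4 * x)) / 2

/-- `q m` is the function `q_m` from the paper, meaningful for `m ≥ 2`
(the values at `m = 0, 1` are junk values `1`, never used in the statements). -/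
def q : ℕ → ℝ → ℝ
  | 0, _ => 1
  | 1, _ => 1
  | 2, x => sf x
  | 3, x => sf (f x) * sf x - rf (f x) * lf x
  | m + 4, x =>
      sf (f^[m + 2] x) * q (m + 3) x - rf (f^[m + 2] x) * lf (f^[m + 1] x) * q (m + 2) x

lemma q_rec (k : ℕ) (x : ℝ) :
    q (k+4) x = sf (f^[k+2] x) * q (k+3) x - rf (f^[k+2] x) * lf (f^[k+1] x) * q (k+2) x := rfl

lemma iter0 (k : ℕ) : f^[k] (0:ℝ) = 0 := Function.iterate_fixed (by simp [f]) k

lemma iter5 (k : ℕ) : f^[k+1] (5:ℝ) = 0 := by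
  rw [Function.iterate_succ_apply]
  have : f 5 = 0 := by norm_num [f]
  rw [this]; exact iter0 k

lemma iter6 (k : ℕ) : f^[k+1] (6:ℝ) ≤ -6 := by
  induction k with
  | zero => norm_num [f]
  | succ n ih =>
    rw [Function.iterate_succ_apply']
    have : f (f^[n+1] (6:ℝ)) = (f^[n+1] (6:ℝ)) * (5 - f^[n+1] (6:ℝ)) := rfl
    nlinarith [ih]

-- key inequalities at points y' ≤ -6, y = f y'
lemma key1 (y' : ℝ) (h : y' ≤ -6) : 1 ≤ sf (f y') := by
  simp only [sf, f]; nlinarith [sq_nonneg y', sq_nonneg (y'*y'), sq_nonneg (y'+6)]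

lemma key2 (y' : ℝ) (h : y' ≤ -6) : 0 ≤ rf (f y') * lf y' := by
  simp only [rf, lf, f]; nlinarith [sq_nonneg y', sq_nonneg (y'*y')]

lemma key3 (y' : ℝ) (h : y' ≤ -6) : rf (f y') * lf y' ≤ sf (f y') - 1 := by
  simp only [rf, lf, sf, f]
  nlinarith [sq_nonneg y', sq_nonneg (y'*y'), sq_nonneg (y'+6), sq_nonneg (y'*y'+6*y')]

-- x = 0
lemma zero_case (k : ℕ) : 0 < q (k+2) 0 ∧ 20 * q (k+2) 0 < q (k+3) 0 := by
  induction k with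
  | zero =>
    constructor
    · show (0:ℝ) < sf 0; norm_num [sf]
    · show 20 * sf 0 < sf (f 0) * sf 0 - rf (f 0) * lf 0
      norm_num [sf, rf, lf, f]
  | succ n ih =>
    obtain ⟨h1, h2⟩ := ih
    have h3 : 0 < q (n+3) 0 := lt_trans (by linarith) h2
    refine ⟨h3, ?_⟩
    rw [q_rec, iter0, iter0]
    have hs : sf 0 = 26 := by norm_num [sf]
    have hr : rf 0 = -20 := by norm_num [rf]
    have hl : lf 0 = -6 := by norm_num [lf]
    rw [hs, hr, hl]
    linarith

-- x = 5
lemma five_case (k : ℕ) : 0 < q (k+2) 5 ∧ 6 * q (k+2) 5 ≤ q (k+3) 5 := by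
  induction k with
  | zero =>
    constructor
    · show (0:ℝ) < sf 5; norm_num [sf]
    · show 6 * sf 5 ≤ sf (f 5) * sf 5 - rf (f 5) * lf 5
      norm_num [sf, rf, lf, f]
  | succ n ih =>
    obtain ⟨h1, h2⟩ := ih
    have h3 : 0 < q (n+3) 5 := lt_of_lt_of_le (by linarith) h2
    refine ⟨h3, ?_⟩
    rw [q_rec]
    rw [show n+2 = (n+1)+1 from rfl, iter5, iter5]
    have hs : sf 0 = 26 := by norm_num [sf]
    have hr : rf 0 = -20 := by norm_num [rf]
    have hl : lf 0 = -6 := by norm_num [lf]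
    rw [hs, hr, hl]
    linarith

-- x = 6
lemma six_case (k : ℕ) : q (k+3) 6 ≤ q (k+2) 6 ∧ q (k+2) 6 < 0 := by
  induction k with
  | zero =>
    constructor
    · show sf (f 6) * sf 6 - rf (f 6) * lf 6 ≤ sf 6
      norm_num [sf, rf, lf, f]
    · show sf 6 < (0:ℝ); norm_num [sf]
  | succ n ih =>
    obtain ⟨h1, h2⟩ := ih
    have h3 : q (n+3) 6 < 0 := lt_of_le_of_lt h1 h2
    set y' : ℝ := f^[n+1] 6 with hy'
    have hy'le : y' ≤ -6 := iter6 n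
    have hy : f^[n+2] (6:ℝ) = f y' := by
      rw [hy']; exact Function.iterate_succ_apply' f (n+1) 6
    refine ⟨?_, h3⟩
    rw [q_rec, hy]
    have k1 := key1 y' hy'le
    have k2 := key2 y' hy'le
    have k3 := key3 y' hy'le
    nlinarith [mul_le_mul_of_nonneg_left h1 k2]

theorem statement_0 :
    (∀ m : ℕ, 2 ≤ m → 0 < q m 0 ∧ 0 < q m 5 ∧ q m 6 < 0) ∧
    (∀ m : ℕ, 2 ≤ m → 20 * q m 0 < q (m + 1) 0) ∧
    (∀ m : ℕ, 3 ≤ m → q m 6 ≤ q (m - 1) 6) := by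
  refine ⟨?_, ?_, ?_⟩
  · intro m hm
    obtain ⟨k, rfl⟩ := Nat.exists_eq_add_of_le hm
    rw [show 2 + k = k + 2 by ring]
    exact ⟨(zero_case k).1, (five_case k).1, (six_case k).2⟩
  · intro m hm
    obtain ⟨k, rfl⟩ := Nat.exists_eq_add_of_le hm
    rw [show 2 + k = k + 2 by ring]
    exact (zero_case k).2
  · intro m hm
    obtain ⟨k, rfl⟩ := Nat.exists_eq_add_of_le hm
    rw [show 3 + k = k + 3 by ring, show k + 3 - 1 = k + 2 by omega]
    exact (six_case k).1
end
end

section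
/- q₃(3) > 0, and for every integer m ≥ 2 one has q_{m+2}(φ₋^{(m−1)}(3)) < 0. -/
open Function

noncomputable section

/- ----------------- auxiliary lemmas ----------------- -/

lemma q_two (x : ℝ) : q 2 x = sf x := rfl

lemma q_three (x : ℝ) : q 3 x = sf (f x) * sf x - rf (f x) * lf x := rfl

lemma q_four (x : ℝ) :
    q 4 x = sf (f (f x)) * q 3 x - rf (f (f x)) * lf (f x) * q 2 x := rfl

lemma q_five (x : ℝ) :
    q 5 x = sf (f (f (f x))) * q 4 x - rf (f (f (f x))) * lf (f (f x)) * q 3 x := rfl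

lemma sqrt_le_of {a b : ℝ} (hb : 0 ≤ b) (h : a ≤ b ^ 2) : Real.sqrt a ≤ b := by
  calc Real.sqrt a ≤ Real.sqrt (b ^ 2) := Real.sqrt_le_sqrt h
  _ = b := Real.sqrt_sq hb

lemma le_sqrt_of {a b : ℝ} (hb : 0 ≤ b) (h : b ^ 2 ≤ a) : b ≤ Real.sqrt a := by
  calc b = Real.sqrt (b ^ 2) := (Real.sqrt_sq hb).symm
  _ ≤ Real.sqrt a := Real.sqrt_le_sqrt h

lemma f_phim {x : ℝ} (hx : x ≤ 25 / 4) : f (phim x) = x := by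
  have hs : Real.sqrt (25 - 4 * x) ^ 2 = 25 - 4 * x := Real.sq_sqrt (by linarith)
  unfold f phim
  linear_combination (-1 / 4 : ℝ) * hs

lemma phim_pos {x : ℝ} (h1 : 0 < x) (h2 : x ≤ 25 / 4) : 0 < phim x := by
  have hle : Real.sqrt (25 - 4 * x) ≤ 5 := sqrt_le_of (by norm_num) (by nlinarith)
  have hne : Real.sqrt (25 - 4 * x) ≠ 5 := by
    intro h
    have := Real.sq_sqrt (show (0:ℝ) ≤ 25 - 4 * x by linarith)
    rw [h] at this
    nlinarith
  have h : Real.sqrt (25 - 4 * x) < 5 := lt_of_le_of_ne hle hne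
  unfold phim; linarith

lemma phim_le_015 {x : ℝ} (h1 : 0 ≤ x) (h2 : x ≤ 0.7) : phim x ≤ 0.15 := by
  have h : (4.7 : ℝ) ≤ Real.sqrt (25 - 4 * x) := le_sqrt_of (by norm_num) (by nlinarith)
  unfold phim; linarith

lemma phim_le_0031 {x : ℝ} (h1 : 0 ≤ x) (h2 : x ≤ 0.15) : phim x ≤ 0.031 := by
  have h : (4.938 : ℝ) ≤ Real.sqrt (25 - 4 * x) := le_sqrt_of (by norm_num) (by nlinarith)
  unfold phim; linarith

lemma phim3_bounds : 0.69 ≤ phim 3 ∧ phim 3 ≤ 0.7 := by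
  have h1 : Real.sqrt (25 - 4 * 3) ≤ 3.62 := sqrt_le_of (by norm_num) (by norm_num)
  have h2 : (3.6 : ℝ) ≤ Real.sqrt (25 - 4 * 3) := le_sqrt_of (by norm_num) (by norm_num)
  constructor <;> (unfold phim; linarith)

/-- Last-row expansion of the tridiagonal determinant. -/
lemma q_expand : ∀ n : ℕ, ∀ x : ℝ,
    q (n + 4) x = sf x * q (n + 3) (f x) - rf (f x) * lf x * q (n + 2) (f (f x)) := by
  intro n
  induction n using Nat.strong_induction_on with
  | _ n ih =>
    match n with
    | 0 =>
      intro x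
      show q 4 x = sf x * q 3 (f x) - rf (f x) * lf x * q 2 (f (f x))
      rw [q_four, q_three, q_three, q_two, q_two]
      ring
    | 1 =>
      intro x
      show q 5 x = sf x * q 4 (f x) - rf (f x) * lf x * q 3 (f (f x))
      have h0 : q 4 x = sf x * q 3 (f x) - rf (f x) * lf x * q 2 (f (f x)) :=
        ih 0 (by norm_num) x
      rw [q_five, h0, q_four (f x), q_three (f (f x)), q_three (f x), q_three x, q_two, q_two]
      ring
    | (k + 2) =>
      intro x
      show q (k + 6) x = sf x * q (k + 5) (f x) - rf (f x) * lf x * q (k + 4) (f (f x))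
      have h1 : q (k + 5) x
          = sf x * q (k + 4) (f x) - rf (f x) * lf x * q (k + 3) (f (f x)) :=
        ih (k + 1) (by omega) x
      have h2 : q (k + 4) x
          = sf x * q (k + 3) (f x) - rf (f x) * lf x * q (k + 2) (f (f x)) :=
        ih k (by omega) x
      have i1 : f^[k + 3] (f x) = f^[k + 4] x := (Function.iterate_succ_apply f (k + 3) x).symm
      have i2 : f^[k + 2] (f x) = f^[k + 3] x := (Function.iterate_succ_apply f (k + 2) x).symm
      have i3 : f^[k + 2] (f (f x)) = f^[k + 4] x := by
        rw [(Function.iterate_succ_apply f (k + 2) (f x)).symm, i1]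
      have i4 : f^[k + 1] (f (f x)) = f^[k + 3] x := by
        rw [(Function.iterate_succ_apply f (k + 1) (f x)).symm, i2]
      have h3 : q (k + 5) (f x)
          = sf (f^[k + 4] x) * q (k + 4) (f x)
            - rf (f^[k + 4] x) * lf (f^[k + 3] x) * q (k + 3) (f x) := by
        have : q (k + 5) (f x)
            = sf (f^[k + 3] (f x)) * q (k + 4) (f x)
              - rf (f^[k + 3] (f x)) * lf (f^[k + 2] (f x)) * q (k + 3) (f x) := rfl
        rw [this, i1, i2]
      have h4 : q (k + 4) (f (f x))
          = sf (f^[k + 4] x) * q (k + 3) (f (f x))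
            - rf (f^[k + 4] x) * lf (f^[k + 3] x) * q (k + 2) (f (f x)) := by
        have : q (k + 4) (f (f x))
            = sf (f^[k + 2] (f (f x))) * q (k + 3) (f (f x))
              - rf (f^[k + 2] (f (f x))) * lf (f^[k + 1] (f (f x))) * q (k + 2) (f (f x)) := rfl
        rw [this, i3, i4]
      have h5 : q (k + 6) x
          = sf (f^[k + 4] x) * q (k + 5) x
            - rf (f^[k + 4] x) * lf (f^[k + 3] x) * q (k + 4) x := rfl
      rw [h5, h1, h2, h3, h4]
      ring

lemma X_succ (k : ℕ) : phim^[k + 1] 3 = phim (phim^[k] 3) :=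
  Function.iterate_succ_apply' phim k 3

lemma X_one : phim^[1] 3 = phim 3 := by simp

lemma X_bounds : ∀ k : ℕ, 0 < phim^[k + 2] 3 ∧ phim^[k + 2] 3 ≤ 0.15 := by
  intro k
  induction k with
  | zero =>
    have h1 := phim3_bounds
    have h2 : phim^[2] 3 = phim (phim 3) := by
      rw [X_succ 1, X_one]
    rw [h2]
    exact ⟨phim_pos (by linarith [h1.1]) (by linarith [h1.2]),
      phim_le_015 (by linarith [h1.1]) h1.2⟩
  | succ n ih =>
    have h2 : phim^[n + 3] 3 = phim (phim^[n + 2] 3) := X_succ (n + 2)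
    rw [h2]
    refine ⟨phim_pos ih.1 (by linarith [ih.2]), ?_⟩
    have := phim_le_0031 (le_of_lt ih.1) ih.2
    linarith

lemma X3_bound (k : ℕ) : phim^[k + 3] 3 ≤ 0.031 := by
  rw [X_succ (k + 2)]
  exact phim_le_0031 (le_of_lt (X_bounds k).1) (X_bounds k).2

lemma X_le (k : ℕ) : phim^[k] 3 ≤ 25 / 4 := by
  match k with
  | 0 => norm_num
  | 1 => rw [X_one]; linarith [phim3_bounds.2]
  | (n + 2) => linarith [(X_bounds n).2]

lemma fX (k : ℕ) : f (phim^[k + 1] 3) = phim^[k] 3 := by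
  rw [X_succ k]
  exact f_phim (X_le k)

lemma q33 : q 3 3 = 4 := by
  rw [q_three]
  unfold f sf rf lf
  norm_num

lemma B0_neg : q 4 (phim^[1] 3) < 0 := by
  have e : q 4 (phim^[1] 3)
      = sf (phim^[1] 3) * q 3 (f (phim^[1] 3))
        - rf (f (phim^[1] 3)) * lf (phim^[1] 3) * q 2 (f (f (phim^[1] 3))) :=
    q_expand 0 (phim^[1] 3)
  have h1 : f (phim^[1] 3) = 3 := by
    have := fX 0
    simpa using this
  rw [h1, q33, show f (3:ℝ) = 6 by unfold f; norm_num, q_two] at e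
  have hb := phim3_bounds
  have hx : phim^[1] 3 = phim 3 := X_one
  rw [e, hx]
  unfold sf rf lf
  have hx0 : (0:ℝ) < phim 3 := by linarith [hb.1]
  nlinarith [hb.1, hb.2, mul_nonneg hx0.le (sub_nonneg.2 hb.2),
    mul_pos (mul_pos hx0 hx0) hx0]

lemma invariant : ∀ k : ℕ, q (k + 4) (phim^[k + 1] 3) < 0 ∧
    q (k + 5) (phim^[k + 2] 3) ≤ 10 * q (k + 4) (phim^[k + 1] 3) := by
  intro k
  induction k with
  | zero =>
    refine ⟨B0_neg, ?_⟩
    have e : q 5 (phim^[2] 3)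
        = sf (phim^[2] 3) * q 4 (f (phim^[2] 3))
          - rf (f (phim^[2] 3)) * lf (phim^[2] 3) * q 3 (f (f (phim^[2] 3))) :=
      q_expand 1 (phim^[2] 3)
    have h1 : f (phim^[2] 3) = phim^[1] 3 := fX 1
    have h2 : f (phim^[1] 3) = 3 := by simpa using fX 0
    rw [h1, h2, q33] at e
    have hX2a : 0 < phim^[2] 3 := (X_bounds 0).1
    have hX2b : phim^[2] 3 ≤ 0.15 := (X_bounds 0).2
    have hX1a : 0.69 ≤ phim^[1] 3 := by rw [X_one]; exact phim3_bounds.1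
    have hX1b : phim^[1] 3 ≤ 0.7 := by rw [X_one]; exact phim3_bounds.2
    have hB0 := B0_neg
    have hsf : 10 ≤ sf (phim^[2] 3) := by
      unfold sf
      nlinarith [mul_nonneg (mul_nonneg hX2a.le hX2a.le) (sub_nonneg.2 hX2b),
        mul_nonneg hX2a.le hX2a.le]
    have hrf : rf (phim^[1] 3) ≤ 0 := by
      unfold rf; nlinarith
    have hlf : lf (phim^[2] 3) ≤ 0 := by
      unfold lf; nlinarith
    rw [e]
    nlinarith [mul_nonneg (sub_nonneg.2 hsf) (neg_nonneg.2 (le_of_lt hB0)),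
      mul_nonneg (neg_nonneg.2 hrf) (neg_nonneg.2 hlf)]
  | succ n ih =>
    have hB1 : q (n + 5) (phim^[n + 2] 3) < 0 :=
      lt_of_le_of_lt ih.2 (by linarith [ih.1])
    refine ⟨hB1, ?_⟩
    have e : q (n + 6) (phim^[n + 3] 3)
        = sf (phim^[n + 3] 3) * q (n + 5) (f (phim^[n + 3] 3))
          - rf (f (phim^[n + 3] 3)) * lf (phim^[n + 3] 3)
            * q (n + 4) (f (f (phim^[n + 3] 3))) :=
      q_expand (n + 2) (phim^[n + 3] 3)
    have h1 : f (phim^[n + 3] 3) = phim^[n + 2] 3 := fX (n + 2)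
    have h2 : f (phim^[n + 2] 3) = phim^[n + 1] 3 := fX (n + 1)
    rw [h1, h2] at e
    -- bounds
    have hX3a : 0 < phim^[n + 3] 3 := (X_bounds (n + 1)).1
    have hX3b : phim^[n + 3] 3 ≤ 0.031 := X3_bound n
    have hX2a : 0 < phim^[n + 2] 3 := (X_bounds n).1
    have hX2b : phim^[n + 2] 3 ≤ 0.15 := (X_bounds n).2
    have hsf : 22 ≤ sf (phim^[n + 3] 3) := by
      unfold sf
      nlinarith [mul_nonneg (mul_nonneg hX3a.le hX3a.le) (sub_nonneg.2 hX3b),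
        mul_nonneg hX3a.le hX3a.le]
    have hrf1 : -20 ≤ rf (phim^[n + 2] 3) := by
      unfold rf; nlinarith [mul_nonneg hX2a.le (show (0:ℝ) ≤ 7 - phim^[n + 2] 3 by linarith)]
    have hrf2 : rf (phim^[n + 2] 3) ≤ 0 := by
      unfold rf; nlinarith [mul_nonneg hX2a.le hX2a.le]
    have hlf1 : -6 ≤ lf (phim^[n + 3] 3) := by unfold lf; nlinarith
    have hlf2 : lf (phim^[n + 3] 3) ≤ 0 := by unfold lf; nlinarith
    have hP1 : 0 ≤ rf (phim^[n + 2] 3) * lf (phim^[n + 3] 3) := by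
      nlinarith [mul_nonneg (neg_nonneg.2 hrf2) (neg_nonneg.2 hlf2)]
    have hP2 : rf (phim^[n + 2] 3) * lf (phim^[n + 3] 3) ≤ 120 := by
      nlinarith [mul_le_mul (show -rf (phim^[n + 2] 3) ≤ 20 by linarith)
        (show -lf (phim^[n + 3] 3) ≤ 6 by linarith)
        (by linarith : (0:ℝ) ≤ -lf (phim^[n + 3] 3)) (by norm_num : (0:ℝ) ≤ 20)]
    have hB0 := ih.1
    have hB10 := ih.2
    have f1 : sf (phim^[n + 3] 3) * q (n + 5) (phim^[n + 2] 3)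
        ≤ 22 * q (n + 5) (phim^[n + 2] 3) := by
      nlinarith [mul_nonneg (sub_nonneg.2 hsf) (neg_nonneg.2 (le_of_lt hB1))]
    have f2 : -(rf (phim^[n + 2] 3) * lf (phim^[n + 3] 3) * q (n + 4) (phim^[n + 1] 3))
        ≤ 120 * (-(q (n + 4) (phim^[n + 1] 3))) := by
      nlinarith [mul_nonneg (sub_nonneg.2 hP2) (neg_nonneg.2 (le_of_lt hB0))]
    rw [e]
    linarith

theorem statement_2 :
    0 < q 3 3 ∧ ∀ m : ℕ, 2 ≤ m → q (m + 2) (phim^[m - 1] 3) < 0 := by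
  constructor
  · rw [q33]; norm_num
  · intro m hm
    obtain ⟨k, rfl⟩ : ∃ k, m = k + 2 := ⟨m - 2, by omega⟩
    rw [show k + 2 - 1 = k + 1 from by omega]
    exact (invariant k).1
end
end

section
/- Let m ≥ 2 and x ∈ ℝ with f^{(i)}(x) = 5 for some integer 0 ≤ i ≤ m−2. Then q_m(x) ≠ 0. -/
open Function

noncomputable section

lemma qrec (n : ℕ) (x : ℝ) :
    q (n + 3) x = sf (f^[n + 1] x) * q (n + 2) x - rf (f^[n + 1] x) * lf (f^[n] x) * q (n + 1) x := by
  match n with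
  | 0 => simp [q]
  | (k+1) => rfl

lemma dualq : ∀ (m : ℕ) (x : ℝ),
    q (m + 3) x = sf x * q (m + 2) (f x) - rf (f x) * lf x * q (m + 1) (f (f x)) := by
  intro m
  induction m using Nat.strong_induction_on with
  | _ m ih =>
    match m with
    | 0 => intro x; simp [q]; ring
    | 1 =>
      intro x
      rw [qrec 1, qrec 0 (f x)]
      simp only [q, iterate_one, iterate_succ_apply, iterate_zero_apply]
      ring
    | (m+2) =>
      intro x
      have h1 : f^[m + 2] (f x) = f^[m + 3] x := (iterate_succ_apply f (m+2) x).symm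
      have h2 : f^[m + 1] (f x) = f^[m + 2] x := (iterate_succ_apply f (m+1) x).symm
      have h3 : f^[m + 1] (f (f x)) = f^[m + 3] x := by
        rw [← iterate_succ_apply f (m+1), ← iterate_succ_apply f (m+2)]
      have h4 : f^[m] (f (f x)) = f^[m + 2] x := by
        rw [← iterate_succ_apply f m, ← iterate_succ_apply f (m+1)]
      have e1 := qrec (m+2) x
      have e2 := ih (m+1) (by omega) x
      have e3 := ih m (by omega) x
      have e4 := qrec (m+1) (f x)
      rw [h1, h2] at e4
      have e5 := qrec m (f (f x))
      rw [h3, h4] at e5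
      have hx2 : m + 1 + 2 = m + 3 := by omega
      have hx3 : m + 2 + 2 = m + 4 := by omega
      have hx4 : m + 2 + 3 = m + 5 := by omega
      have hx5 : m + 1 + 3 = m + 4 := by omega
      rw [hx2, hx5] at e2 e4
      rw [hx3, hx4] at e1
      rw [e1, e2, e3, e4, e5]
      ring

open Polynomial in
def Fp : ℚ[X] := 5 * X - X ^ 2
open Polynomial in
def Sp : ℚ[X] := (2 - X) * (4 - X) * (5 - X) - (14 - 3 * X)
open Polynomial in
def Rp : ℚ[X] := -2 * (2 - X) * (5 - X)
open Polynomial in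
def Lp : ℚ[X] := X - 6

open Polynomial in
def Qp : ℕ → ℚ[X]
  | 0 => 1
  | 1 => 1
  | 2 => Sp
  | (m + 3) => Sp * (Qp (m + 2)).comp Fp - Rp.comp Fp * Lp * ((Qp (m + 1)).comp Fp).comp Fp

open Polynomial

lemma aeval_Fp (x : ℝ) : aeval x Fp = f x := by simp [Fp, f, map_ofNat]; ring
lemma aeval_Sp (x : ℝ) : aeval x Sp = sf x := by simp [Sp, sf, map_ofNat]
lemma aeval_Rp (x : ℝ) : aeval x Rp = rf x := by simp [Rp, rf, map_ofNat]
lemma aeval_Lp (x : ℝ) : aeval x Lp = lf x := by simp [Lp, lf, map_ofNat]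

lemma evalQ : ∀ (m : ℕ) (x : ℝ), aeval x (Qp m) = q m x := by
  intro m
  induction m using Nat.strong_induction_on with
  | _ m ih =>
    match m with
    | 0 => intro x; simp [Qp, q]
    | 1 => intro x; simp [Qp, q]
    | 2 => intro x; simp [Qp, q, ← aeval_Sp]
    | (n+3) =>
      intro x
      rw [show Qp (n+3) = Sp * (Qp (n + 2)).comp Fp - Rp.comp Fp * Lp * ((Qp (n + 1)).comp Fp).comp Fp from rfl]
      rw [dualq n x]
      simp only [map_sub, map_mul, aeval_comp, aeval_Fp, aeval_Sp, aeval_Rp, aeval_Lp]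
      rw [ih (n+2) (by omega), ih (n+1) (by omega)]

def ap (n : ℕ) : ℚ[X] := (X - 5) * Qp (n + 1) - Rp * (Qp n).comp Fp
def bp (n : ℕ) : ℚ[X] := (26 - 6 * X) * Qp (n + 1) + 6 * Rp * (Qp n).comp Fp

lemma idII (n : ℕ) : 6 * ap n + bp n = -4 * Qp (n + 1) := by
  unfold ap bp; ring

lemma idI (n : ℕ) : Qp (n + 3) = X * (ap (n + 1)).comp Fp + (bp (n + 1)).comp Fp := by
  rw [show Qp (n+3) = Sp * (Qp (n + 2)).comp Fp - Rp.comp Fp * Lp * ((Qp (n + 1)).comp Fp).comp Fp from rfl]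
  unfold ap bp
  simp only [sub_comp, mul_comp, add_comp, X_comp, C_comp, ofNat_comp, natCast_comp]
  rw [show Sp = X * (Fp - 5) + (26 - 6 * Fp) by unfold Sp Fp; ring,
      show Lp = X - 6 from rfl]
  ring

def Fz : ℤ[X] := C 5 * X - X ^ 2

def Nz : ℕ → ℤ[X]
  | 0 => X
  | (d + 1) => (Nz d).comp Fz

lemma natDegree_Fz : Fz.natDegree = 2 := by
  unfold Fz; compute_degree!

lemma coeff_Fz_two : Fz.coeff 2 = -1 := by
  simp [Fz, coeff_one, coeff_X]

lemma lc_Fz : Fz.leadingCoeff = -1 := by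
  rw [leadingCoeff, natDegree_Fz, coeff_Fz_two]

lemma aeval_Fz (x : ℝ) : aeval x Fz = f x := by
  simp [Fz, f, map_ofNat]; ring

lemma aeval_Nz (d : ℕ) (x : ℝ) : aeval x (Nz d) = f^[d] x := by
  induction d generalizing x with
  | zero => simp [Nz]
  | succ d ih =>
    rw [show Nz (d+1) = (Nz d).comp Fz from rfl, aeval_comp, aeval_Fz, ih,
      Function.iterate_succ_apply]

lemma natDegree_Nz (d : ℕ) : (Nz d).natDegree = 2 ^ d := by
  induction d with
  | zero => simp [Nz]
  | succ d ih =>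
    rw [show Nz (d+1) = (Nz d).comp Fz from rfl, natDegree_comp, ih, natDegree_Fz, pow_succ]

lemma lc_Nz (d : ℕ) (hd : 1 ≤ d) : (Nz d).leadingCoeff = -1 := by
  induction d with
  | zero => omega
  | succ d ih =>
    rcases Nat.eq_or_lt_of_le hd with h | h
    · obtain rfl : d = 0 := by omega
      show (X.comp Fz).leadingCoeff = -1
      simp [lc_Fz]
    · rw [show Nz (d+1) = (Nz d).comp Fz from rfl,
        leadingCoeff_comp (by rw [natDegree_Fz]; norm_num), ih (by omega), lc_Fz,
        natDegree_Nz]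
      rw [Even.neg_one_pow ⟨2^(d-1), by rw [← two_mul, ← pow_succ']; congr 1; omega⟩]
      norm_num

lemma map_Fz : Fz.map (Int.castRingHom (ZMod 5)) = -(X ^ 2) := by
  have h5 : (Int.castRingHom (ZMod 5)) 5 = 0 := by decide
  simp only [Fz, Polynomial.map_sub, Polynomial.map_mul, Polynomial.map_pow, map_C, map_X, h5]
  simp

lemma map_Nz (d : ℕ) (hd : 1 ≤ d) :
    (Nz d).map (Int.castRingHom (ZMod 5)) = -(X ^ (2 ^ d)) := by
  induction d with
  | zero => omega
  | succ d ih =>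
    rcases Nat.eq_or_lt_of_le hd with h | h
    · obtain rfl : d = 0 := by omega
      show (X.comp Fz).map (Int.castRingHom (ZMod 5)) = -(X ^ (2^1))
      simp only [X_comp]
      rw [map_Fz]
      norm_num
    · rw [show Nz (d+1) = (Nz d).comp Fz from rfl, Polynomial.map_comp, map_Fz, ih (by omega)]
      rw [neg_comp, pow_comp, X_comp]
      rw [Even.neg_pow ⟨2^(d-1), by rw [← two_mul, ← pow_succ']; congr 1; omega⟩]
      rw [← pow_mul]
      have h2 : 2 * 2 ^ d = 2 ^ (d + 1) := (pow_succ' 2 d).symm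
      rw [h2]

lemma coeff_zero_Nz (d : ℕ) : (Nz d).coeff 0 = 0 := by
  induction d with
  | zero => simp [Nz]
  | succ d ih =>
    rw [coeff_zero_eq_eval_zero] at ih ⊢
    rw [show Nz (d+1) = (Nz d).comp Fz from rfl, eval_comp]
    simpa [Fz] using ih

def Pz (d : ℕ) : ℤ[X] := Nz d - C 5

lemma aeval_Pz (d : ℕ) (x : ℝ) : aeval x (Pz d) = f^[d] x - 5 := by
  simp [Pz, aeval_Nz, map_ofNat]

lemma natDegree_Pz (d : ℕ) (hd : 1 ≤ d) : (Pz d).natDegree = 2 ^ d := by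
  rw [Pz, natDegree_sub_C, natDegree_Nz]

lemma lc_Pz (d : ℕ) (hd : 1 ≤ d) : (Pz d).leadingCoeff = -1 := by
  have h1 : (Pz d).natDegree = 2 ^ d := natDegree_Pz d hd
  rw [leadingCoeff, h1, Pz, coeff_sub, coeff_C,
    if_neg (by positivity), sub_zero, ← natDegree_Nz d, ← leadingCoeff, lc_Nz d hd]

lemma eisenstein_Pz (d : ℕ) (hd : 1 ≤ d) :
    (Pz d).IsEisensteinAt (Ideal.span {(5 : ℤ)}) := by
  constructor
  · rw [lc_Pz d hd, Ideal.mem_span_singleton]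
    norm_num
  · intro n hn
    rw [natDegree_Pz d hd] at hn
    rw [Ideal.mem_span_singleton]
    have hmap : ((Pz d).map (Int.castRingHom (ZMod 5))).coeff n = 0 := by
      rw [Pz, Polynomial.map_sub, map_C, map_Nz d hd]
      have h5 : (Int.castRingHom (ZMod 5)) 5 = 0 := by decide
      rw [h5, map_zero, sub_zero, coeff_neg, coeff_X_pow, if_neg (by omega), neg_zero]
    rw [coeff_map] at hmap
    exact (ZMod.intCast_zmod_eq_zero_iff_dvd _ 5).mp hmap
  · rw [show ((Ideal.span {(5:ℤ)}) ^ 2 : Ideal ℤ) = Ideal.span {(25 : ℤ)} by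
      rw [Ideal.span_singleton_pow]; norm_num, Ideal.mem_span_singleton]
    have : (Pz d).coeff 0 = -5 := by
      rw [Pz, coeff_sub, coeff_zero_Nz, coeff_C]; norm_num
    rw [this]
    norm_num

lemma irreducible_Pz (d : ℕ) (hd : 1 ≤ d) : Irreducible (Pz d) := by
  refine (eisenstein_Pz d hd).irreducible ?_ ?_ ?_
  · exact Ideal.span_singleton_prime (by norm_num) |>.mpr (by norm_num)
  · intro r hr
    have h := (C_dvd_iff_dvd_coeff r (Pz d)).mp hr ((Pz d).natDegree)
    rw [← leadingCoeff, lc_Pz d hd] at h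
    exact isUnit_of_dvd_unit h (by norm_num)
  · rw [natDegree_Pz d hd]; positivity

def Pq (d : ℕ) : ℚ[X] := (Pz d).map (algebraMap ℤ ℚ)

lemma irreducible_Pq (d : ℕ) (hd : 1 ≤ d) : Irreducible (Pq d) := by
  have hprim : (Pz d).IsPrimitive := by
    intro r hr
    have h := (C_dvd_iff_dvd_coeff r (Pz d)).mp hr ((Pz d).natDegree)
    rw [← leadingCoeff, lc_Pz d hd] at h
    exact isUnit_of_dvd_unit h (by norm_num)
  exact (hprim.irreducible_iff_irreducible_map_fraction_map).mp (irreducible_Pz d hd)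

lemma aeval_Pq (d : ℕ) (x : ℝ) : aeval x (Pq d) = f^[d] x - 5 := by
  rw [Pq, aeval_map_algebraMap, aeval_Pz]

lemma natDegree_Pq (d : ℕ) (hd : 1 ≤ d) : (Pq d).natDegree = 2 ^ d := by
  rw [Pq, natDegree_map_eq_of_injective (algebraMap ℤ ℚ).injective_int, natDegree_Pz d hd]

lemma isIntegral_of_iter (d : ℕ) (hd : 1 ≤ d) (x : ℝ) (hx : f^[d] x = 5) :
    IsIntegral ℚ x := by
  refine IsAlgebraic.isIntegral ⟨Pq d, ?_, ?_⟩
  · intro h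
    have := natDegree_Pq d hd
    rw [h] at this
    simp at this
    first
    | exact absurd this (Nat.two_pow_pos d).ne'
    | exact absurd this.symm (Nat.two_pow_pos d).ne'
    | omega
  · rw [aeval_Pq, hx]; ring

lemma minpoly_deg (d : ℕ) (hd : 1 ≤ d) (x : ℝ) (hx : f^[d] x = 5) :
    (minpoly ℚ x).natDegree = 2 ^ d := by
  have hint := isIntegral_of_iter d hd x hx
  have hdvd : minpoly ℚ x ∣ Pq d := minpoly.dvd ℚ x (by rw [aeval_Pq, hx]; ring)
  obtain ⟨c, hc⟩ := hdvd
  have hirr := irreducible_Pq d hd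
  have hcu : IsUnit c := by
    rcases hirr.isUnit_or_isUnit hc with h | h
    · exact absurd h (minpoly.not_isUnit ℚ x)
    · exact h
  have hc0 : c ≠ 0 := hcu.ne_zero
  have hm0 : minpoly ℚ x ≠ 0 := minpoly.ne_zero hint
  have := natDegree_Pq d hd
  rw [hc, natDegree_mul hm0 hc0, natDegree_eq_zero_of_isUnit hcu, add_zero] at this
  exact this

open IntermediateField in
lemma key : ∀ (d : ℕ) (x : ℝ), f^[d] x = 5 → aeval x (Qp (d + 1)) ≠ 0 := by
  intro d
  induction d using Nat.strong_induction_on with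
  | _ d ih =>
    match d with
    | 0 =>
      intro x hx
      simp [Qp]
    | 1 =>
      intro x hx
      simp only [Function.iterate_one] at hx
      rw [show Qp 2 = Sp from rfl, aeval_Sp]
      have hx' : x * (5 - x) = 5 := hx
      have : sf x = -4 := by unfold sf; linear_combination (x - 6) * hx'
      rw [this]; norm_num
    | (d + 2) =>
      intro x hx h0
      set y := f x with hy_def
      have hy : f^[d + 1] y = 5 := by
        rw [hy_def, ← Function.iterate_succ_apply]; exact hx
      have hQy : aeval y (Qp (d + 2)) ≠ 0 := ih (d + 1) (by omega) y hy
      set A := aeval y (ap (d + 1)) with hA_def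
      set B := aeval y (bp (d + 1)) with hB_def
      have hexp : x * A + B = 0 := by
        rw [hA_def, hB_def]
        have := congrArg (aeval x) (idI d)
        rw [h0] at this
        simp only [map_add, map_mul, aeval_X, aeval_comp, aeval_Fp] at this
        rw [← hy_def] at this
        linarith [this]
      by_cases hA : A = 0
      · have hB : B = 0 := by rw [hA] at hexp; linarith
        have h2 := congrArg (aeval y) (idII (d + 1))
        simp only [map_add, map_mul, map_neg, map_ofNat] at h2
        rw [← hA_def, ← hB_def, hA, hB] at h2
        apply hQy
        nlinarith [h2]
      · -- degree contradiction
        have memK : ∀ p : ℚ[X], aeval y p ∈ ℚ⟮y⟯ := by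
          intro p
          have h1 : aeval y p ∈ Algebra.adjoin ℚ ({y} : Set ℝ) := by
            rw [Algebra.adjoin_singleton_eq_range_aeval]; exact ⟨p, rfl⟩
          exact IntermediateField.algebra_adjoin_le_adjoin ℚ {y} h1
        have hxval : x = -B / A := by field_simp; linarith
        have hxK : x ∈ ℚ⟮y⟯ := by
          rw [hxval]
          exact div_mem (neg_mem (memK _)) (memK _)
        have hyInt : IsIntegral ℚ y := isIntegral_of_iter (d + 1) (by omega) y hy
        have hxInt : IsIntegral ℚ x := isIntegral_of_iter (d + 2) (by omega) x hx
        haveI : FiniteDimensional ℚ ℚ⟮y⟯ :=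
          IntermediateField.adjoin.finiteDimensional hyInt
        set x' : ℚ⟮y⟯ := ⟨x, hxK⟩ with hx'_def
        have hmap : algebraMap ℚ⟮y⟯ ℝ x' = x := rfl
        have hmp : minpoly ℚ x' = minpoly ℚ x := by
          rw [← hmap, minpoly.algebraMap_eq (algebraMap ℚ⟮y⟯ ℝ).injective]
        have hle : (minpoly ℚ x').natDegree ≤ Module.finrank ℚ ℚ⟮y⟯ :=
          minpoly.natDegree_le x'
        rw [hmp, minpoly_deg (d + 2) (by omega) x hx] at hle
        rw [IntermediateField.adjoin.finrank hyInt, minpoly_deg (d + 1) (by omega) y hy] at hle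
        have : (2:ℕ) ^ (d + 1) < 2 ^ (d + 2) := Nat.pow_lt_pow_right (by norm_num) (by omega)
        omega

lemma sf5 : sf 5 = 1 := by norm_num [sf]
lemma sf0 : sf 0 = 26 := by norm_num [sf]
lemma rf5 : rf 5 = 0 := by norm_num [rf]
lemma rf0 : rf 0 = -20 := by norm_num [rf]
lemma lf5 : lf 5 = -1 := by norm_num [lf]
lemma lf0 : lf 0 = -6 := by norm_num [lf]

lemma iter_zero (i k : ℕ) (x : ℝ) (hx : f^[i] x = 5) : f^[i + (k + 1)] x = 0 := by
  induction k with
  | zero =>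
    rw [show i + 1 = i + 1 from rfl, Function.iterate_succ_apply', hx]
    norm_num [f]
  | succ k ihk =>
    rw [show i + (k + 2) = (i + (k + 1)) + 1 by ring, Function.iterate_succ_apply', ihk]
    norm_num [f]

lemma tail : ∀ (j i : ℕ) (x : ℝ), f^[i] x = 5 → q (i + 2 + j) x = 6 ^ j * q (i + 1) x := by
  intro j
  induction j using Nat.strong_induction_on with
  | _ j ihj =>
    match j with
    | 0 =>
      intro i x hx
      match i with
      | 0 =>
        have hx5 : x = 5 := hx
        subst hx5
        simp [q, sf5]
      | (k + 1) =>
        have e : k + 1 + 2 + 0 = k + 3 := by omega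
        rw [e, qrec k x]
        have h1 : f^[k + 1] x = 5 := hx
        rw [h1, sf5, rf5]
        ring
    | 1 =>
      intro i x hx
      match i with
      | 0 =>
        have hx5 : x = 5 := hx
        subst hx5
        have hf5 : f 5 = 0 := by norm_num [f]
        simp [q, hf5, sf5, sf0, rf0, lf5]
        norm_num
      | (k + 1) =>
        have e : k + 1 + 2 + 1 = (k + 1) + 3 := by omega
        rw [e, qrec (k + 1) x]
        have h1 : f^[k + 2] x = 0 := by
          have := iter_zero (k + 1) 0 x hx
          simpa using this
        have h2 : f^[k + 1] x = 5 := hx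
        rw [h1, h2, sf0, rf0, lf5]
        have h3 := ihj 0 (by omega) (k + 1) x hx
        have e2 : k + 1 + 2 + 0 = k + 3 := by omega
        rw [e2] at h3
        rw [h3]
        ring
    | (h + 2) =>
      intro i x hx
      have e : i + 2 + (h + 2) = (i + h + 1) + 3 := by omega
      rw [e, qrec (i + h + 1) x]
      have h1 : f^[i + h + 2] x = 0 := by
        have := iter_zero i (h + 1) x hx
        rw [show i + (h + 1 + 1) = i + h + 2 by omega] at this
        exact this
      have h2 : f^[i + h + 1] x = 0 := by
        have := iter_zero i h x hx
        rw [show i + (h + 1) = i + h + 1 by omega] at this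
        exact this
      rw [h1, h2, sf0, rf0, lf0]
      have e3 : i + h + 1 + 2 = i + 2 + (h + 1) := by omega
      have e4 : i + h + 1 + 1 = i + 2 + h := by omega
      rw [e3, e4, ihj (h + 1) (by omega) i x hx, ihj h (by omega) i x hx]
      ring


theorem statement_4 (m : ℕ) (hm : 2 ≤ m) (x : ℝ) (i : ℕ) (hi : i ≤ m - 2)
    (hx : f^[i] x = 5) : q m x ≠ 0 := by
  obtain ⟨j, rfl⟩ : ∃ j, m = i + 2 + j := ⟨m - (i + 2), by omega⟩
  rw [tail j i x hx]
  have hq : q (i + 1) x ≠ 0 := by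
    rw [← evalQ]
    exact key i x hx
  exact mul_ne_zero (pow_ne_zero _ (by norm_num)) hq
end
end

section
/- Let m ≥ 2 and λ ∈ ℝ with q_m(λ) = 0 and f^{(i)}(λ) ∉ {2, 5} for all integers 0 ≤ i ≤ m−2. Suppose b₀, b₁, …, b_m ∈ ℝ satisfy b₀ = b_m = 0 and, for every 1 ≤ i ≤ m−1, l(f^{(m−i−1)}(λ))·b_{i−1} + s(f^{(m−i−1)}(λ))·b_i + r(f^{(m−i−1)}(λ))·b_{i+1} = 0. If not all of b₀, …, b_m are zero, then b₁ ≠ 0 and b_{m−1} ≠ 0. -/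
open Function

noncomputable section

lemma q_def3 (j : ℕ) (x : ℝ) :
    q (j + 3) x = sf (f^[j + 1] x) * q (j + 2) x - rf (f^[j + 1] x) * lf (f^[j] x) * q (j + 1) x := by
  match j with
  | 0 => simp [q]
  | (i+1) => rfl

lemma q_rec_end (j : ℕ) : ∀ x : ℝ,
    q (j + 3) x = sf x * q (j + 2) (f x) - lf x * rf (f x) * q (j + 1) (f (f x)) := by
  induction j using Nat.strong_induction_on with
  | _ j ih =>
    rcases j with _ | _ | j
    · show ∀ x : ℝ, q 3 x = sf x * q 2 (f x) - lf x * rf (f x) * q 1 (f (f x))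
      intro x
      have d3 : q 3 x = sf (f x) * sf x - rf (f x) * lf x := rfl
      have d2 : q 2 (f x) = sf (f x) := rfl
      have d1 : q 1 (f (f x)) = 1 := rfl
      rw [d3, d2, d1]; ring
    · show ∀ x : ℝ, q 4 x = sf x * q 3 (f x) - lf x * rf (f x) * q 2 (f (f x))
      intro x
      have d4 : q 4 x = sf (f (f x)) * q 3 x - rf (f (f x)) * lf (f x) * q 2 x := rfl
      have d3' : q 3 x = sf (f x) * sf x - rf (f x) * lf x := rfl
      have d3 : q 3 (f x) = sf (f (f x)) * sf (f x) - rf (f (f x)) * lf (f x) := rfl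
      have d2 : ∀ z : ℝ, q 2 z = sf z := fun _ => rfl
      rw [d4, d3', d3, d2 x, d2 (f (f x))]; ring
    · show ∀ x : ℝ, q (j + 2 + 3) x
          = sf x * q (j + 2 + 2) (f x) - lf x * rf (f x) * q (j + 2 + 1) (f (f x))
      intro x
      have h1 := ih (j + 1) (by omega) x
      have h0 := ih j (by omega) x
      have e1 := q_def3 (j + 2) x
      have e2 := q_def3 (j + 1) (f x)
      rw [← Function.iterate_succ_apply f (j + 1 + 1) x,
          ← Function.iterate_succ_apply f (j + 1) x] at e2
      have e3 := q_def3 j (f (f x))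
      rw [← Function.iterate_succ_apply f (j + 1) (f x),
          ← Function.iterate_succ_apply f j (f x),
          ← Function.iterate_succ_apply f (j + 1 + 1) x,
          ← Function.iterate_succ_apply f (j + 1) x] at e3
      simp only [show j + 1 + 1 + 1 = j + 3 from rfl, show j + 1 + 1 = j + 2 from rfl,
        show j + 2 + 1 = j + 3 from rfl, show j + 1 + 2 = j + 3 from rfl,
        show j + 1 + 3 = j + 4 from rfl, show j + 2 + 2 = j + 4 from rfl,
        show j + 2 + 3 = j + 5 from rfl] at e1 e2 e3 h1 h0 ⊢
      rw [e1, h1, h0, e2, e3]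
      ring

lemma f_le (y : ℝ) (hy : y ≤ -6) : f y ≤ -6 := by
  have h1 : (0:ℝ) ≤ -(y + 1) := by linarith
  have h2 : (0:ℝ) ≤ -(y - 6) := by linarith
  unfold f
  nlinarith [mul_nonneg h1 h2]

lemma orb_le (k : ℕ) : f^[k] (-6 : ℝ) ≤ -6 := by
  induction k with
  | zero => norm_num
  | succ k ih => rw [Function.iterate_succ_apply']; exact f_le _ ih

lemma rl_nonneg (y : ℝ) (hy : y ≤ -6) : 0 ≤ rf (f y) * lf y := by
  have hfy : f y ≤ -6 := f_le y hy
  have h1 : (0:ℝ) ≤ -rf (f y) := by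
    unfold rf
    nlinarith [mul_pos (show (0:ℝ) < 2 - f y by linarith) (show (0:ℝ) < 5 - f y by linarith)]
  have h2 : (0:ℝ) ≤ -lf y := by unfold lf; linarith
  nlinarith [mul_nonneg h1 h2]

lemma key_ineq (y : ℝ) (hy : y ≤ -6) : 1 ≤ sf (f y) - rf (f y) * lf y := by
  have ht : (0:ℝ) ≤ -6 - y := by linarith
  unfold sf rf lf f
  nlinarith [pow_nonneg ht 6, pow_nonneg ht 5, pow_nonneg ht 4, pow_nonneg ht 3,
    pow_nonneg ht 2, ht]

lemma qneg : ∀ j : ℕ, 1 ≤ q j (-6) ∧ q j (-6) ≤ q (j + 1) (-6) := by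
  intro j
  induction j with
  | zero => norm_num [q]
  | succ j ih =>
    obtain ⟨h1, h2⟩ := ih
    refine ⟨le_trans h1 h2, ?_⟩
    cases j with
    | zero => norm_num [q, sf]
    | succ k =>
      show q (k + 2) (-6:ℝ) ≤ q (k + 3) (-6)
      have h1' : (1:ℝ) ≤ q (k + 1) (-6) := h1
      have h2' : q (k + 1) (-6:ℝ) ≤ q (k + 2) (-6) := h2
      have hy := orb_le k
      have hrec := q_def3 k (-6 : ℝ)
      rw [Function.iterate_succ_apply'] at hrec
      set y := f^[k] (-6:ℝ) with hydef
      have hA := key_ineq y hy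
      have hP := rl_nonneg y hy
      rw [hrec]
      nlinarith [mul_nonneg hP (sub_nonneg.mpr h2'),
        mul_nonneg (by linarith : (0:ℝ) ≤ sf (f y) - rf (f y) * lf y - 1)
          (by linarith : (0:ℝ) ≤ q (k + 2) (-6:ℝ))]

lemma rf_ne (y : ℝ) (h2 : y ≠ 2) (h5 : y ≠ 5) : rf y ≠ 0 := by
  unfold rf
  have a2 : (2:ℝ) - y ≠ 0 := sub_ne_zero.mpr (Ne.symm h2)
  have a5 : (5:ℝ) - y ≠ 0 := sub_ne_zero.mpr (Ne.symm h5)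
  exact mul_ne_zero (mul_ne_zero (by norm_num) a2) a5

lemma desc : ∀ k : ℕ, ∀ x : ℝ, (∀ i ≤ k, f^[i] x ≠ 2 ∧ f^[i] x ≠ 5) →
    q (k + 2) x = 0 → q (k + 1) (f x) = 0 → False := by
  intro k
  induction k with
  | zero =>
    intro x _ _ h1
    have : q 1 (f x) = 1 := rfl
    rw [this] at h1
    norm_num at h1
  | succ k ih =>
    intro x hforb hq1 hq2
    have hrec := q_rec_end k x
    rw [show k + 1 + 2 = k + 3 from rfl] at hq1
    have hq2' : q (k + 2) (f x) = 0 := hq2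
    rw [hrec, hq2'] at hq1
    have hrf : rf (f x) ≠ 0 := by
      have := hforb 1 (by omega)
      exact rf_ne _ (by simpa using this.1) (by simpa using this.2)
    have hz : lf x * (rf (f x) * q (k + 1) (f (f x))) = 0 := by linarith
    rcases mul_eq_zero.mp hz with h | h
    · have hx6 : x = 6 := by unfold lf at h; linarith
      have hfx : f x = -6 := by rw [hx6]; norm_num [f]
      rw [hfx] at hq2'
      have := (qneg (k + 2)).1
      linarith
    · rcases mul_eq_zero.mp h with h | h
      · exact hrf h
      · exact ih (f x) (fun i hi => by
          have := hforb (i + 1) (by omega)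
          rw [Function.iterate_succ_apply] at this
          exact this) hq2' h

theorem statement_7 (m : ℕ) (hm : 2 ≤ m) (lam : ℝ) (hq : q m lam = 0)
    (hforb : ∀ i : ℕ, i ≤ m - 2 → f^[i] lam ≠ 2 ∧ f^[i] lam ≠ 5)
    (b : ℕ → ℝ) (hb0 : b 0 = 0) (hbm : b m = 0)
    (heq : ∀ i : ℕ, 1 ≤ i → i ≤ m - 1 →
      lf (f^[m - i - 1] lam) * b (i - 1) + sf (f^[m - i - 1] lam) * b i +
        rf (f^[m - i - 1] lam) * b (i + 1) = 0)
    (hnz : ¬ ∀ i : ℕ, i ≤ m → b i = 0) :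
    b 1 ≠ 0 ∧ b (m - 1) ≠ 0 := by
  obtain ⟨n, rfl⟩ : ∃ n, m = n + 2 := ⟨m - 2, by omega⟩
  have heq' : ∀ i : ℕ, 1 ≤ i → i ≤ n + 1 →
      lf (f^[n + 1 - i] lam) * b (i - 1) + sf (f^[n + 1 - i] lam) * b i +
        rf (f^[n + 1 - i] lam) * b (i + 1) = 0 := by
    intro i h1 h2
    have e : n + 2 - i - 1 = n + 1 - i := by omega
    have := heq i h1 (by omega)
    rwa [e] at this
  have hforb' : ∀ i : ℕ, i ≤ n → f^[i] lam ≠ 2 ∧ f^[i] lam ≠ 5 :=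
    fun i hi => hforb i (by omega)
  have hrfne : ∀ i : ℕ, i ≤ n → rf (f^[i] lam) ≠ 0 :=
    fun i hi => rf_ne _ (hforb' i hi).1 (hforb' i hi).2
  -- first part : b 1 ≠ 0
  have hb1 : b 1 ≠ 0 := by
    intro h1
    apply hnz
    intro i
    induction i using Nat.strong_induction_on with
    | _ i ih =>
      intro hi
      rcases i with _ | _ | j
      · exact hb0
      · exact h1
      · show b (j + 2) = 0
        have e := heq' (j + 1) (by omega) (by omega)
        have eidx : n + 1 - (j + 1) = n - j := by omega
        rw [eidx, show j + 1 - 1 = j from rfl] at e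
        have bz1 : b j = 0 := ih j (by omega) (by omega)
        have bz2 : b (j + 1) = 0 := ih (j + 1) (by omega) (by omega)
        rw [bz1, bz2] at e
        have hz : rf (f^[n - j] lam) * b (j + 1 + 1) = 0 := by linarith
        rcases mul_eq_zero.mp hz with h | h
        · exact absurd h (hrfne (n - j) (by omega))
        · exact h
  refine ⟨hb1, ?_⟩
  show b (n + 1) ≠ 0
  intro hbm1
  -- forward solution formula
  have key : ∀ k : ℕ,
      (k ≤ n + 1 → b (k + 1) * (∏ i ∈ Finset.range k, rf (f^[n - i] lam)) =
        (-1 : ℝ) ^ k * q (k + 1) (f^[n + 1 - k] lam) * b 1) ∧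
      (k + 1 ≤ n + 1 → b (k + 1 + 1) * (∏ i ∈ Finset.range (k + 1), rf (f^[n - i] lam)) =
        (-1 : ℝ) ^ (k + 1) * q (k + 1 + 1) (f^[n + 1 - (k + 1)] lam) * b 1) := by
    intro k
    induction k with
    | zero =>
      constructor
      · intro _
        show b 1 * (∏ i ∈ Finset.range 0, rf (f^[n - i] lam)) =
          (-1 : ℝ) ^ 0 * q 1 (f^[n + 1] lam) * b 1
        have : q 1 (f^[n + 1] lam) = 1 := rfl
        rw [this]
        simp
      · intro hk
        show b 2 * (∏ i ∈ Finset.range 1, rf (f^[n - i] lam)) =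
          (-1 : ℝ) ^ 1 * q 2 (f^[n] lam) * b 1
        rw [Finset.prod_range_one]
        have e := heq' 1 (by omega) (by omega)
        rw [show n + 1 - 1 = n from rfl, show (1:ℕ) - 1 = 0 from rfl, hb0] at e
        have d2 : q 2 (f^[n] lam) = sf (f^[n] lam) := rfl
        rw [d2, show n - 0 = n from rfl]
        linear_combination e
    | succ k ih =>
      refine ⟨ih.2, ?_⟩
      intro hk
      have hk' : k + 2 ≤ n + 1 := hk
      show b (k + 3) * (∏ i ∈ Finset.range (k + 2), rf (f^[n - i] lam)) =
        (-1 : ℝ) ^ (k + 2) * q (k + 3) (f^[n + 1 - (k + 2)] lam) * b 1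
      have i1 : n + 1 - (k + 2) = n - (k + 1) := by omega
      have i2 : n + 1 - (k + 1) = n - k := by omega
      have i3 : n + 1 - k = n - k + 1 := by omega
      rw [i1, Finset.prod_range_succ, Finset.prod_range_succ]
      have e := heq' (k + 2) (by omega) (by omega)
      rw [i1, show k + 2 - 1 = k + 1 from rfl, show k + 2 + 1 = k + 3 from rfl] at e
      have ih2 := ih.2 (by omega)
      rw [i2, Finset.prod_range_succ, show k + 1 + 1 = k + 2 from rfl] at ih2
      have ih1 := ih.1 (by omega)
      rw [i3] at ih1
      have hy1 : f (f^[n - (k + 1)] lam) = f^[n - k] lam := by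
        rw [show n - k = n - (k + 1) + 1 from by omega, Function.iterate_succ_apply']
      have hy2 : f (f^[n - k] lam) = f^[n - k + 1] lam :=
        (Function.iterate_succ_apply' f (n - k) lam).symm
      have hrec := q_rec_end k (f^[n - (k + 1)] lam)
      rw [hy1, hy2] at hrec
      linear_combination
        ((∏ i ∈ Finset.range k, rf (f^[n - i] lam)) * rf (f^[n - k] lam)) * e
        - lf (f^[n - (k + 1)] lam) * rf (f^[n - k] lam) * ih1
        - sf (f^[n - (k + 1)] lam) * ih2
        - (-1 : ℝ) ^ (k + 2) * b 1 * hrec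
  have En := (key n).1 (by omega)
  rw [hbm1, zero_mul, show n + 1 - n = 1 by omega, Function.iterate_one] at En
  have hqf : q (n + 1) (f lam) = 0 := by
    by_contra hne
    exact (mul_ne_zero (mul_ne_zero (pow_ne_zero _ (by norm_num)) hne) hb1) En.symm
  exact desc n lam hforb' hq hqf
end
end

section
/- For every integer m ≥ 2 and every x ∈ ℝ with 0 < x < φ₋^{(m)}(6), one has q_m(x) > 0. Moreover, for every m ≥ 2 and every z ∈ ℝ with 0 < z < 6, one has q_{m+1}(φ₋^{(m+1)}(z)) ≥ 6·q_m(φ₋^{(m)}(z)) > 0. -/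
open Function

noncomputable section

lemma qtop (k : ℕ) (x : ℝ) :
    q (k+3) x = sf (f^[k+1] x) * q (k+2) x - rf (f^[k+1] x) * lf (f^[k] x) * q (k+1) x := by
  match k with
  | 0 => simp [q]
  | k+1 => rfl

lemma qbot : ∀ (k : ℕ) (x : ℝ),
    q (k+3) x = sf x * q (k+2) (f x) - rf (f x) * lf x * q (k+1) (f (f x))
  | 0, x => by simp [q]; ring
  | 1, x => by
      show q 4 x = _
      simp only [q, Function.iterate_succ_apply, Function.iterate_zero, Function.iterate_one, id_eq]
      ring
  | (k+2), x => by
      have h1 := qbot (k+1) x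
      have h2 := qbot k x
      have t1 := qtop (k+1) (f x)
      have t2 := qtop k (f (f x))
      have t0 := qtop (k+2) x
      show q (k+5) x = sf x * q (k+4) (f x) - rf (f x) * lf x * q (k+3) (f (f x))
      simp only [Function.iterate_succ_apply] at t0 t1 t2 h1 h2 ⊢
      linear_combination t0 + sf (f^[k] (f (f (f x)))) * h1 - rf (f^[k] (f (f (f x)))) * lf (f^[k] (f (f x))) * h2 - sf x * t1 + rf (f x) * lf x * t2

lemma sf_ge {x : ℝ} (h0 : 0 ≤ x) (h1 : x ≤ 1/2) : 6 ≤ sf x := by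
  unfold sf; nlinarith [sq_nonneg x, mul_nonneg (mul_nonneg h0 h0) h0]

lemma key_s14 {x : ℝ} (h0 : 0 ≤ x) (h1 : x ≤ 1/10) : 36 ≤ 6 * sf x - rf (f x) * lf x := by
  unfold sf rf lf f
  nlinarith [mul_nonneg h0 h0, mul_nonneg (mul_nonneg h0 h0) h0,
    mul_nonneg (mul_nonneg (mul_nonneg h0 h0) h0) h0,
    mul_nonneg (mul_nonneg (mul_nonneg (mul_nonneg h0 h0) h0) h0) h0]

lemma f_phim_s14 {z : ℝ} (hz : z ≤ 25/4) : f (phim z) = z := by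
  have h := Real.sq_sqrt (show (0:ℝ) ≤ 25 - 4*z by linarith)
  unfold f phim
  linear_combination (-1/4 : ℝ) * h

lemma phim_pos_s14 {z : ℝ} (h0 : 0 < z) (h1 : z ≤ 25/4) : 0 < phim z := by
  have h : Real.sqrt (25 - 4*z) < 5 := by
    rw [show (5:ℝ) = Real.sqrt 25 by rw [show (25:ℝ) = 5^2 by norm_num, Real.sqrt_sq]; norm_num]
    exact Real.sqrt_lt_sqrt (by linarith) (by linarith)
  unfold phim; linarith

lemma phim_le {z w : ℝ} (h : z ≤ w) : phim z ≤ phim w := by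
  have := Real.sqrt_le_sqrt (show 25 - 4*w ≤ 25 - 4*z by linarith)
  unfold phim; linarith

lemma phim_lt {z w : ℝ} (h : z < w) (hw : w ≤ 25/4) : phim z < phim w := by
  have := Real.sqrt_lt_sqrt (show (0:ℝ) ≤ 25 - 4*w by linarith) (show 25 - 4*w < 25 - 4*z by linarith)
  unfold phim; linarith

lemma phim_six : phim 6 = 2 := by
  unfold phim
  norm_num [show (25:ℝ) - 4*6 = 1 by norm_num, Real.sqrt_one]

lemma phim_le_two {z : ℝ} (h : z ≤ 6) : phim z ≤ 2 := by
  calc phim z ≤ phim 6 := phim_le h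
  _ = 2 := phim_six

lemma phim_two : phim 2 ≤ 49/100 := by
  unfold phim
  rw [show (25:ℝ) - 4*2 = 17 by norm_num]
  nlinarith [Real.sq_sqrt (show (0:ℝ) ≤ 17 by norm_num), Real.sqrt_nonneg (17:ℝ)]

lemma phim_049 : phim (49/100) = 1/10 := by
  unfold phim
  rw [show (25:ℝ) - 4*(49/100) = (24/5)^2 by norm_num, Real.sqrt_sq (by norm_num)]
  norm_num

lemma chain : ∀ m : ℕ, 0 < phim^[m] 6 ∧ phim^[m] 6 ≤ 6 ∧ (1 ≤ m → phim^[m] 6 ≤ 2)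
  | 0 => by simp
  | (m+1) => by
      obtain ⟨h0, h6, _⟩ := chain m
      rw [Function.iterate_succ_apply']
      refine ⟨phim_pos_s14 h0 (by linarith), ?_, fun _ => phim_le_two h6⟩
      linarith [phim_le_two h6]

lemma chain_half (m : ℕ) : phim^[m+2] 6 ≤ 49/100 := by
  rw [Function.iterate_succ_apply']
  calc phim (phim^[m+1] 6) ≤ phim 2 := phim_le ((chain (m+1)).2.2 (by omega))
  _ ≤ 49/100 := phim_two

lemma chain_tenth (m : ℕ) : phim^[m+3] 6 ≤ 1/10 := by
  rw [Function.iterate_succ_apply']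
  calc phim (phim^[m+2] 6) ≤ phim (49/100) := phim_le (chain_half m)
  _ = 1/10 := phim_049

lemma iterz : ∀ (m : ℕ) (z : ℝ), 0 < z → z < 6 → 0 < phim^[m] z ∧ phim^[m] z < phim^[m] 6
  | 0, z, h0, h6 => ⟨h0, h6⟩
  | (m+1), z, h0, h6 => by
      obtain ⟨ha, hb⟩ := iterz m z h0 h6
      obtain ⟨_, hc, _⟩ := chain m
      rw [Function.iterate_succ_apply', Function.iterate_succ_apply']
      exact ⟨phim_pos_s14 ha (by linarith), phim_lt hb (by linarith)⟩

lemma f_mono {a b : ℝ} (h0 : 0 ≤ a) (h : a < b) (hb : b ≤ 5/2) : f a < f b := by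
  unfold f; nlinarith

lemma main : ∀ (m : ℕ) (x : ℝ), 0 < x → x < phim^[m+2] 6 →
    0 < q (m+2) x ∧ 6 * q (m+1) (f x) ≤ q (m+2) x
  | 0, x, hx0, hx1 => by
      have h2 : phim^[0+2] 6 ≤ 49/100 := chain_half 0
      have hs : 6 ≤ sf x := sf_ge hx0.le (by linarith)
      refine ⟨show 0 < sf x by linarith, ?_⟩
      show 6 * (1:ℝ) ≤ sf x
      linarith
  | (m+1), x, hx0, hx1 => by
      have hten : phim^[m+3] 6 ≤ 1/10 := chain_tenth m
      have hx10 : x < 1/10 := lt_of_lt_of_le hx1 hten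
      have hfx0 : 0 < f x := by unfold f; nlinarith
      have heq : f (phim^[m+3] 6) = phim^[m+2] 6 := by
        rw [show phim^[m+3] 6 = phim (phim^[m+2] 6) from Function.iterate_succ_apply' phim (m+2) 6]
        exact f_phim_s14 (by linarith [(chain (m+2)).2.2 (by omega)])
      have hfx1 : f x < phim^[m+2] 6 := heq ▸ f_mono hx0.le hx1 (by linarith)
      obtain ⟨hA, hAB⟩ := main m (f x) hfx0 hfx1
      have hrec := qbot m x
      have hfx2 : f x ≤ 1/2 := by linarith [chain_half m]
      have hP : 0 ≤ rf (f x) * lf x := by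
        have h := mul_nonneg (mul_nonneg (show (0:ℝ) ≤ 2 - f x by linarith)
          (show (0:ℝ) ≤ 5 - f x by linarith)) (show (0:ℝ) ≤ 6 - x by linarith)
        unfold rf lf; nlinarith
      have hkey := key_s14 hx0.le hx10.le
      have h6 : 6 * q (m+2) (f x) ≤ q (m+3) x := by
        rw [hrec]
        nlinarith [mul_nonneg (show (0:ℝ) ≤ 6*sf x - rf (f x)*lf x - 36 by linarith) hA.le,
          mul_le_mul_of_nonneg_left hAB hP]
      exact ⟨by linarith, h6⟩

theorem statement_14 :
    (∀ m : ℕ, 2 ≤ m → ∀ x : ℝ, 0 < x → x < phim^[m] 6 → 0 < q m x) ∧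
    (∀ m : ℕ, 2 ≤ m → ∀ z : ℝ, 0 < z → z < 6 →
      0 < q m (phim^[m] z) ∧ 6 * q m (phim^[m] z) ≤ q (m + 1) (phim^[m + 1] z)) := by
  constructor
  · intro m hm x hx0 hx1
    obtain ⟨k, rfl⟩ : ∃ k, m = k + 2 := ⟨m - 2, by omega⟩
    exact (main k x hx0 hx1).1
  · intro m hm z hz0 hz6
    obtain ⟨k, rfl⟩ : ∃ k, m = k + 2 := ⟨m - 2, by omega⟩
    obtain ⟨hw0, hw1⟩ := iterz (k+2) z hz0 hz6
    obtain ⟨hx0, hx1⟩ := iterz (k+3) z hz0 hz6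
    have hfx : f (phim^[k+3] z) = phim^[k+2] z := by
      rw [show phim^[k+3] z = phim (phim^[k+2] z) from Function.iterate_succ_apply' phim (k+2) z]
      exact f_phim_s14 (by linarith [(chain (k+2)).2.2 (by omega)])
    refine ⟨(main k _ hw0 hw1).1, ?_⟩
    have := (main (k+1) _ hx0 hx1).2
    rw [hfx] at this
    exact this
end
end

section
/- For every integer m ≥ 2 and every x ∈ ℝ with q_mᴺ(x) = 0, x ≠ 2 and x ≠ 6, one has q_mᴺ(5 − x) = 0. -/
open Function

noncomputable section

/-- `ltN m` is the auxiliary function `l̃_m` from the paper, meaningful for `m ≥ 1`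
(the value at `m = 0` is a junk value `1`). -/
def ltN : ℕ → ℝ → ℝ
  | 0, _ => 1
  | 1, x => 4 - x
  | 2, x => (4 - f x) * sf x + 4 * lf x
  | m + 3, x => sf x * ltN (m + 2) (f x) - rf (f x) * lf x * ltN (m + 1) (f (f x))

/-- `qN m` is the function `q_mᴺ` from the paper, meaningful for `m ≥ 1`. -/
def qN (m : ℕ) (x : ℝ) : ℝ :=
  if m = 1 then x ^ 2 - 6 * x
  else (2 - x) * ltN m x - 4 * (2 - x) * (5 - x) * ltN (m - 1) (f x)

lemma f_symm (x : ℝ) : f (5 - x) = f x := by unfold f; ring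

lemma key_identity (m : ℕ) (hm : 2 ≤ m) (x : ℝ) :
    (x - 2) * (x - 6) * qN m (5 - x) = (x - 3) * (x + 1) * qN m x := by
  match m, hm with
  | 2, _ =>
    unfold qN
    norm_num [ltN, f, sf, lf, rf]
    ring
  | (k + 3), _ =>
    unfold qN
    have h1 : k + 3 ≠ 1 := by omega
    rw [if_neg h1, if_neg h1]
    show (x - 2) * (x - 6) *
        ((2 - (5 - x)) * ltN (k + 3) (5 - x)
          - 4 * (2 - (5 - x)) * (5 - (5 - x)) * ltN (k + 2) (f (5 - x))) =
      (x - 3) * (x + 1) *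
        ((2 - x) * ltN (k + 3) x - 4 * (2 - x) * (5 - x) * ltN (k + 2) (f x))
    simp only [ltN, f_symm]
    unfold f sf lf rf; ring

theorem statement_18 (m : ℕ) (hm : 2 ≤ m) (x : ℝ) (hx : qN m x = 0)
    (hx2 : x ≠ 2) (hx6 : x ≠ 6) : qN m (5 - x) = 0 := by
  have h := key_identity m hm x
  rw [hx, mul_zero] at h
  have h2 : (x - 2) * (x - 6) ≠ 0 :=
    mul_ne_zero (sub_ne_zero.mpr hx2) (sub_ne_zero.mpr hx6)
  exact (mul_eq_zero.mp h).resolve_left h2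
end
end
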